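/- arXiv:2209.11384 — 5 statements merged into one kernel-verified Lean document; each statement's English description precedes it below -/
import Mathlib

section
/- For every real number t, the function j satisfies |j(t)| ≤ δ_γ. -/
/-- The superposition function `j` from the first-order optimality system of the
regularized `L^q`-quasinorm optimal control problem, with parameters `q ∈ (0,1)`
and `γ > 0`.  Here `δ_γ = q^q γ^(1-q)` and powers are real powers. -/
noncomputable def jfun (q γ t : ℝ) : ℝ :=
  if 1 / γ < |t| then
    (q ^ q * γ ^ (1 - q) - q * (|t| + (q - 1) / γ) ^ (q - 1)) * Real.sign t
  else 0

/-- Lemma 2.2(a): for every real `t`, `|j(t)| ≤ δ_γ` where `δ_γ = q^q γ^(1-q)`. -/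
theorem abs_jfun_le_delta (q γ : ℝ) (hq0 : 0 < q) (hq1 : q < 1) (hγ : 0 < γ) :
    ∀ t : ℝ, |jfun q γ t| ≤ q ^ q * γ ^ (1 - q) := by
  intro t
  have hδ : (0:ℝ) ≤ q ^ q * γ ^ (1 - q) := by positivity
  unfold jfun
  split_ifs with h
  · have hs : q / γ ≤ |t| + (q - 1) / γ := by
      have h1 : q / γ = 1 / γ + (q - 1) / γ := by ring
      rw [h1]; linarith [h.le]
    have hqγ : (0:ℝ) < q / γ := by positivity
    have hspos : (0:ℝ) < |t| + (q - 1) / γ := lt_of_lt_of_le hqγ hs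
    have hmono : (|t| + (q - 1) / γ) ^ (q - 1) ≤ (q / γ) ^ (q - 1) :=
      Real.rpow_le_rpow_of_nonpos hqγ hs (by linarith)
    have hkey : q * (q / γ) ^ (q - 1) = q ^ q * γ ^ (1 - q) := by
      rw [Real.div_rpow hq0.le hγ.le]
      rw [show (1 : ℝ) - q = -(q - 1) by ring, Real.rpow_neg hγ.le]
      field_simp
      rw [← Real.rpow_one_add' (by positivity) (by intro hc; linarith)]
      ring_nf
    have hub : q * (|t| + (q - 1) / γ) ^ (q - 1) ≤ q ^ q * γ ^ (1 - q) := by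
      rw [← hkey]
      exact mul_le_mul_of_nonneg_left hmono hq0.le
    have hlb : 0 < q * (|t| + (q - 1) / γ) ^ (q - 1) := by positivity
    have habs : |q ^ q * γ ^ (1 - q) - q * (|t| + (q - 1) / γ) ^ (q - 1)|
        ≤ q ^ q * γ ^ (1 - q) := by
      rw [abs_of_nonneg (by linarith)]; linarith
    calc |(q ^ q * γ ^ (1 - q) - q * (|t| + (q - 1) / γ) ^ (q - 1)) * Real.sign t|
        = |q ^ q * γ ^ (1 - q) - q * (|t| + (q - 1) / γ) ^ (q - 1)| * |Real.sign t| :=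
          abs_mul _ _
      _ ≤ q ^ q * γ ^ (1 - q) * 1 :=
          mul_le_mul habs (by
            rcases Real.sign_apply_eq t with h1 | h1 | h1 <;> rw [h1] <;> norm_num) (abs_nonneg _) hδ
      _ = q ^ q * γ ^ (1 - q) := mul_one _
  · simpa using hδ
end

section
/- The function j is Lipschitz continuous on ℝ with Lipschitz constant L_j = 2γ δ_γ / q; that is, |j(t₁) − j(t₂)| ≤ (2γ δ_γ / q)·|t₁ − t₂| for all real t₁, t₂. -/
open Set

noncomputable def jfunBranch (q γ s : ℝ) : ℝ :=
  q ^ q * γ ^ (1 - q) - q * (s + (q - 1) / γ) ^ (q - 1)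

noncomputable def jfunRamp (q γ s : ℝ) : ℝ :=
  jfunBranch q γ (max s (1 / γ))

section
variable {q γ : ℝ}

lemma mul_div_rpow_sub_one (hq : 0 < q) (hγ : 0 < γ) :
    q * (q / γ) ^ (q - 1) = q ^ q * γ ^ (1 - q) := by
  rw [Real.rpow_sub (by positivity), Real.rpow_one, Real.div_rpow hq.le hγ.le,
    Real.rpow_sub hγ, Real.rpow_one]
  field_simp

lemma mul_div_rpow_sub_two (hq : 0 < q) (hγ : 0 < γ) :
    q * (q / γ) ^ (q - 2) = γ * (q ^ q * γ ^ (1 - q)) / q := by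
  rw [Real.rpow_sub (by positivity), Real.rpow_two, Real.div_rpow hq.le hγ.le,
    Real.rpow_sub hγ, Real.rpow_one]
  field_simp

lemma jfunBranch_one_div (hq : 0 < q) (hγ : 0 < γ) : jfunBranch q γ (1 / γ) = 0 := by
  rw [jfunBranch, show 1 / γ + (q - 1) / γ = q / γ by ring, mul_div_rpow_sub_one hq hγ,
    sub_self]

lemma jfun_eq_jfunRamp_sub (hq : 0 < q) (hγ : 0 < γ) (t : ℝ) :
    jfun q γ t = jfunRamp q γ t - jfunRamp q γ (-t) := by
  have hc : 0 < 1 / γ := by positivity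
  have h0 := jfunBranch_one_div hq hγ
  rcases lt_or_ge (1 / γ) t with ht | ht
  · rw [jfun, if_pos (ht.trans_le (le_abs_self t)), abs_of_pos (hc.trans ht),
      Real.sign_of_pos (hc.trans ht), jfunRamp, jfunRamp, max_eq_left ht.le,
      max_eq_right (by linarith), h0, mul_one, sub_zero, jfunBranch]
  rcases lt_or_ge t (-(1 / γ)) with ht' | ht'
  · rw [jfun, if_pos (by rw [abs_of_neg (by linarith)]; linarith), abs_of_neg (by linarith),
      Real.sign_of_neg (by linarith), jfunRamp, jfunRamp, max_eq_right (by linarith),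
      max_eq_left (by linarith), h0, jfunBranch]
    ring
  · rw [jfun, if_neg (not_lt.mpr (abs_le.mpr ⟨ht', ht⟩)), jfunRamp, jfunRamp,
      max_eq_right ht, max_eq_right (by linarith), sub_self]

lemma hasDerivAt_jfunBranch {s : ℝ} (hs : 0 < s + (q - 1) / γ) :
    HasDerivAt (jfunBranch q γ) (q * (1 - q) * (s + (q - 1) / γ) ^ (q - 2)) s := by
  have h := (((hasDerivAt_id s).add_const ((q - 1) / γ)).rpow_const (p := q - 1)
    (Or.inl hs.ne')).const_mul q |>.const_sub (q ^ q * γ ^ (1 - q))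
  refine h.congr_deriv ?_
  rw [show q - 1 - 1 = q - 2 by ring, id]
  ring

lemma lipschitzOnWith_jfunBranch (hq : 0 < q) (hq1 : q < 1) (hγ : 0 < γ) :
    LipschitzOnWith (Real.toNNReal (γ * (q ^ q * γ ^ (1 - q)) / q)) (jfunBranch q γ)
      (Ici (1 / γ)) := by
  have hbase : ∀ s ∈ Ici (1 / γ), q / γ ≤ s + (q - 1) / γ := fun s hs => by
    rw [show q / γ = 1 / γ + (q - 1) / γ by ring]
    exact add_le_add_left hs _
  have hpos : ∀ s ∈ Ici (1 / γ), 0 < s + (q - 1) / γ := fun s hs =>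
    (div_pos hq hγ).trans_le (hbase s hs)
  have hderiv : ∀ s ∈ Ici (1 / γ), ‖q * (1 - q) * (s + (q - 1) / γ) ^ (q - 2)‖ ≤
      γ * (q ^ q * γ ^ (1 - q)) / q := fun s hs => by
    have hrpow :=
      Real.rpow_le_rpow_of_nonpos (div_pos hq hγ) (hbase s hs) (by linarith : q - 2 ≤ 0)
    rw [Real.norm_of_nonneg (by have := hpos s hs; positivity), ← mul_div_rpow_sub_two hq hγ,
      mul_comm q, mul_assoc]
    calc (1 - q) * (q * (s + (q - 1) / γ) ^ (q - 2))
        _ ≤ 1 * (q * (s + (q - 1) / γ) ^ (q - 2)) := by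
          gcongr
          · have := hpos s hs; positivity
          · linarith
        _ ≤ q * (q / γ) ^ (q - 2) := by rw [one_mul]; gcongr
  refine LipschitzOnWith.of_dist_le' fun x hx y hy => ?_
  simpa only [Real.dist_eq, Real.norm_eq_abs] using
    (convex_Ici (1 / γ)).norm_image_sub_le_of_norm_hasDerivWithin_le
      (fun s hs => (hasDerivAt_jfunBranch (hpos s hs)).hasDerivWithinAt) hderiv hy hx

lemma lipschitzWith_jfunRamp (hq : 0 < q) (hq1 : q < 1) (hγ : 0 < γ) :
    LipschitzWith (Real.toNNReal (γ * (q ^ q * γ ^ (1 - q)) / q)) (jfunRamp q γ) := by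
  have h := (lipschitzOnWith_jfunBranch hq hq1 hγ).comp
    (LipschitzWith.id.max_const (1 / γ)).lipschitzOnWith (s := univ)
    (fun s _ => le_max_right s (1 / γ))
  rw [lipschitzOnWith_univ, mul_one] at h
  exact h

lemma lipschitzWith_jfun (hq : 0 < q) (hq1 : q < 1) (hγ : 0 < γ) :
    LipschitzWith (Real.toNNReal (2 * γ * (q ^ q * γ ^ (1 - q)) / q)) (jfun q γ) := by
  have hramp := lipschitzWith_jfunRamp hq hq1 hγ
  have h := hramp.sub (hramp.comp isometry_neg.lipschitz)
  rw [mul_one, ← two_mul, ← Real.toNNReal_ofNat, ← Real.toNNReal_mul zero_le_two,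
    ← mul_div_assoc, ← mul_assoc] at h
  rw [funext (jfun_eq_jfunRamp_sub hq hγ)]
  exact h

end

/-- Lemma 2.2(b): `j` is Lipschitz continuous with Lipschitz constant
`L_j = 2 γ δ_γ / q`, where `δ_γ = q^q γ^(1-q)`. -/
theorem jfun_lipschitz (q γ : ℝ) (hq0 : 0 < q) (hq1 : q < 1) (hγ : 0 < γ) :
    ∀ t₁ t₂ : ℝ,
      |jfun q γ t₁ - jfun q γ t₂| ≤ 2 * γ * (q ^ q * γ ^ (1 - q)) / q * |t₁ - t₂| := by
  intro t₁ t₂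
  have h := (lipschitzWith_jfun hq0 hq1 hγ).dist_le_mul t₁ t₂
  rwa [Real.dist_eq, Real.dist_eq, Real.coe_toNNReal _ (by positivity)] at h
end

section
/- The function j is monotone nondecreasing on ℝ; equivalently, (j(t₁) − j(t₂))·(t₁ − t₂) ≥ 0 for all real t₁, t₂. -/
open Set

namespace jfun

variable {q γ : ℝ}

theorem neg (t : ℝ) : jfun q γ (-t) = -jfun q γ t := by
  unfold jfun
  rw [abs_neg, Real.sign_neg]
  split_ifs <;> ring

theorem delta_eq (hq0 : 0 < q) (hγ : 0 < γ) :
    q ^ q * γ ^ (1 - q) = q * (q / γ) ^ (q - 1) := by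
  rw [Real.div_rpow hq0.le hγ.le, Real.rpow_sub_one hq0.ne', show 1 - q = -(q - 1) by ring,
    Real.rpow_neg hγ.le]
  field_simp

theorem eq_of_nonneg (hq0 : 0 < q) (hγ : 0 < γ) {t : ℝ} (ht : 0 ≤ t) :
    jfun q γ t = q ^ q * γ ^ (1 - q) - q * (max t (1 / γ) + (q - 1) / γ) ^ (q - 1) := by
  unfold jfun
  rw [abs_of_nonneg ht]
  split_ifs with h
  · rw [max_eq_left h.le, Real.sign_of_pos ((one_div_pos.2 hγ).trans h), mul_one]
  · rw [max_eq_right (not_lt.1 h), ← add_div, add_sub_cancel, delta_eq hq0 hγ, sub_self]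

theorem monotoneOn_nonneg (hq0 : 0 < q) (hq1 : q < 1) (hγ : 0 < γ) :
    MonotoneOn (jfun q γ) (Ici 0) := by
  intro s hs t ht hst
  rw [eq_of_nonneg hq0 hγ hs, eq_of_nonneg hq0 hγ ht]
  have hbase : 0 < max s (1 / γ) + (q - 1) / γ := by
    have : 0 < 1 / γ + (q - 1) / γ := by rw [← add_div, add_sub_cancel]; positivity
    linarith [le_max_right s (1 / γ)]
  have hpow : (max t (1 / γ) + (q - 1) / γ) ^ (q - 1) ≤ (max s (1 / γ) + (q - 1) / γ) ^ (q - 1) :=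
    Real.rpow_le_rpow_of_nonpos hbase (by gcongr) (by linarith)
  gcongr

end jfun

/-- The function `j` is monotone nondecreasing on `ℝ`; equivalently,
`(j(t₁) − j(t₂)) (t₁ − t₂) ≥ 0` for all real `t₁, t₂`. -/
theorem jfun_monotone (q γ : ℝ) (hq0 : 0 < q) (hq1 : q < 1) (hγ : 0 < γ) :
    Monotone (jfun q γ) ∧
      ∀ t₁ t₂ : ℝ, 0 ≤ (jfun q γ t₁ - jfun q γ t₂) * (t₁ - t₂) := by
  have hmono : Monotone (jfun q γ) :=
    monotone_of_odd_of_monotoneOn_nonneg jfun.neg (jfun.monotoneOn_nonneg hq0 hq1 hγ)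
  exact ⟨hmono, fun t₁ t₂ => monovary_iff_forall_mul_nonneg.1 (hmono.monovary monotone_id) t₂ t₁⟩
end

section
/- Let C > 1. If t₁ and t₂ are real numbers with t₁ ≥ C s* + (1−q)/γ and t₂ ≥ C s* + (1−q)/γ (or with t₁ ≤ −(C s* + (1−q)/γ) and t₂ ≤ −(C s* + (1−q)/γ)), then β|j(t₁) − j(t₂)| ≤ C^{q−2} α |t₁ − t₂|. -/
theorem jfun_neg (q γ t : ℝ) : jfun q γ (-t) = -jfun q γ t := by
  unfold jfun
  rw [abs_neg, Real.sign_neg]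
  split <;> ring

theorem abs_rpow_sub_rpow_le {p m x y : ℝ} (hp : p ≤ 0) (hm : 0 < m) (hx : m ≤ x)
    (hy : m ≤ y) : |x ^ p - y ^ p| ≤ -p * m ^ (p - 1) * |x - y| := by
  have hderiv : ∀ z ∈ Set.Ici m, HasDerivWithinAt (· ^ p) (p * z ^ (p - 1)) (Set.Ici m) z :=
    fun z hz => (Real.hasDerivAt_rpow_const (Or.inl (hm.trans_le hz).ne')).hasDerivWithinAt
  have hbound : ∀ z ∈ Set.Ici m, ‖p * z ^ (p - 1)‖ ≤ -p * m ^ (p - 1) := fun z hz' => by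
    have hz : 0 < z := hm.trans_le hz'
    rw [Real.norm_eq_abs, abs_mul, abs_of_nonpos hp, abs_of_pos (Real.rpow_pos_of_pos hz _)]
    exact mul_le_mul_of_nonneg_left (Real.rpow_le_rpow_of_nonpos hm hz' (by linarith))
      (neg_nonneg.mpr hp)
  simpa [Real.norm_eq_abs, abs_sub_comm] using
    (convex_Ici m).norm_image_sub_le_of_norm_hasDerivWithin_le hderiv hbound hy hx

theorem rpow_mul_rpow_one_sub_eq {q γ : ℝ} (hq : 0 < q) (hγ : 0 < γ) :
    q ^ q * γ ^ (1 - q) = q * (q / γ) ^ (q - 1) := by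
  rw [Real.div_rpow hq.le hγ.le, Real.rpow_sub_one hq.ne', show 1 - q = -(q - 1) by ring,
    Real.rpow_neg hγ.le]
  field_simp

theorem jfun_eq_max_of_lt {q γ t : ℝ} (hq0 : 0 < q) (hq1 : q ≤ 1) (hγ : 0 < γ)
    (ht : (1 - q) / γ < t) :
    jfun q γ t = max (q ^ q * γ ^ (1 - q) - q * (t + (q - 1) / γ) ^ (q - 1)) 0 := by
  have ht0 : 0 < t := lt_of_le_of_lt (div_nonneg (by linarith) hγ.le) ht
  have hx : 0 < t + (q - 1) / γ := by
    rw [show (q - 1) / γ = -((1 - q) / γ) by ring]; linarith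
  have hthreshold : t + (q - 1) / γ - q / γ = t - 1 / γ := by ring
  unfold jfun
  rw [abs_of_pos ht0, Real.sign_of_pos ht0, mul_one, rpow_mul_rpow_one_sub_eq hq0 hγ]
  split_ifs with h
  · have : (t + (q - 1) / γ) ^ (q - 1) ≤ (q / γ) ^ (q - 1) :=
      Real.rpow_le_rpow_of_nonpos (by positivity) (by linarith) (by linarith)
    rw [max_eq_left (by nlinarith)]
  · have : (q / γ) ^ (q - 1) ≤ (t + (q - 1) / γ) ^ (q - 1) :=
      Real.rpow_le_rpow_of_nonpos hx (by linarith) (by linarith)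
    rw [max_eq_right (by nlinarith)]

theorem abs_jfun_sub_jfun_le {q γ m t₁ t₂ : ℝ} (hq0 : 0 < q) (hq1 : q ≤ 1) (hγ : 0 < γ)
    (hm : 0 < m) (ht₁ : m + (1 - q) / γ ≤ t₁) (ht₂ : m + (1 - q) / γ ≤ t₂) :
    |jfun q γ t₁ - jfun q γ t₂| ≤ q * (1 - q) * m ^ (q - 2) * |t₁ - t₂| := by
  have hshift : (q - 1) / γ = -((1 - q) / γ) := by ring
  have hpower := abs_rpow_sub_rpow_le (p := q - 1) (by linarith) hm
    (x := t₁ + (q - 1) / γ) (y := t₂ + (q - 1) / γ) (by linarith) (by linarith)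
  rw [jfun_eq_max_of_lt hq0 hq1 hγ (by linarith), jfun_eq_max_of_lt hq0 hq1 hγ (by linarith)]
  calc _ ≤ |q * (t₂ + (q - 1) / γ) ^ (q - 1) - q * (t₁ + (q - 1) / γ) ^ (q - 1)| :=
        (abs_max_sub_max_le_abs _ _ 0).trans_eq (by ring_nf)
    _ = q * |(t₁ + (q - 1) / γ) ^ (q - 1) - (t₂ + (q - 1) / γ) ^ (q - 1)| := by
        rw [← mul_sub, abs_mul, abs_of_pos hq0, abs_sub_comm]
    _ ≤ q * (-(q - 1) * m ^ (q - 1 - 1) * |t₁ + (q - 1) / γ - (t₂ + (q - 1) / γ)|) := by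
        gcongr
    _ = q * (1 - q) * m ^ (q - 2) * |t₁ - t₂| := by ring_nf

/-- Two-point contraction estimate with factor `C^(q−2) < 1` relative to `α/β`:
with `s* = (β q (1-q)/α)^(1/(2-q))` and `C > 1`, if `t₁, t₂ ≥ C s* + (1−q)/γ`,
or `t₁, t₂ ≤ −(C s* + (1−q)/γ)`, then
`β |j(t₁) − j(t₂)| ≤ C^(q−2) α |t₁ − t₂|`. -/
theorem jfun_contraction (q α β γ C : ℝ) (hq0 : 0 < q) (hq1 : q < 1)
    (hα : 0 < α) (hβ : 0 < β) (hγ : 0 < γ) (hC : 1 < C) :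
    ∀ t₁ t₂ : ℝ,
      ((C * ((β * q * (1 - q) / α) ^ (1 / (2 - q))) + (1 - q) / γ ≤ t₁ ∧
        C * ((β * q * (1 - q) / α) ^ (1 / (2 - q))) + (1 - q) / γ ≤ t₂) ∨
       (t₁ ≤ -(C * ((β * q * (1 - q) / α) ^ (1 / (2 - q))) + (1 - q) / γ) ∧
        t₂ ≤ -(C * ((β * q * (1 - q) / α) ^ (1 / (2 - q))) + (1 - q) / γ))) →
      β * |jfun q γ t₁ - jfun q γ t₂| ≤ C ^ (q - 2) * α * |t₁ - t₂| := by
  intro t₁ t₂ ht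
  set K := β * q * (1 - q) / α with hK_def
  have h1q : 0 < 1 - q := by linarith
  have hK : 0 < K := by positivity
  set s := K ^ (1 / (2 - q))
  have hs : 0 < s := Real.rpow_pos_of_pos hK _
  have hlip : |jfun q γ t₁ - jfun q γ t₂| ≤ q * (1 - q) * (C * s) ^ (q - 2) * |t₁ - t₂| := by
    rcases ht with ⟨h₁, h₂⟩ | ⟨h₁, h₂⟩
    · exact abs_jfun_sub_jfun_le hq0 hq1.le hγ (by positivity) h₁ h₂
    · have := abs_jfun_sub_jfun_le (t₁ := -t₁) (t₂ := -t₂) hq0 hq1.le hγ (m := C * s)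
        (by positivity) (by linarith) (by linarith)
      rwa [jfun_neg, jfun_neg, neg_sub_neg, neg_sub_neg, abs_sub_comm (jfun q γ t₂),
        abs_sub_comm t₂] at this
  have hs_pow : s ^ (q - 2) = K⁻¹ := by
    rw [← Real.rpow_mul hK.le, ← Real.rpow_neg_one K]
    congr 1
    field_simp [show (2 : ℝ) - q ≠ 0 by linarith]
    ring
  have hconst : β * (q * (1 - q) * (C * s) ^ (q - 2)) = C ^ (q - 2) * α := by
    rw [Real.mul_rpow (by linarith) hs.le, hs_pow, hK_def]
    field_simp [h1q.ne']
  calc β * |jfun q γ t₁ - jfun q γ t₂|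
      ≤ β * (q * (1 - q) * (C * s) ^ (q - 2) * |t₁ - t₂|) := by gcongr
    _ = C ^ (q - 2) * α * |t₁ - t₂| := by rw [← hconst]; ring
end

section
/- For all real numbers a, b with a > 1/γ and b > 1/γ, one has |j(a) − j(b)| ≤ q(1−q)(a + (q−1)/γ)^{q−2} |a − b| + q(1−q)(2−q)(q/γ)^{q−3} (a − b)². -/
open Set
open scoped Interval

theorem norm_sub_sub_smul_deriv_le {E : Type*} [NormedAddCommGroup E] [NormedSpace ℝ E]
    {f f' f'' : ℝ → E} {a b M : ℝ}
    (hf : ∀ x ∈ [[a, b]], HasDerivWithinAt f (f' x) [[a, b]] x)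
    (hf' : ∀ x ∈ [[a, b]], HasDerivWithinAt f' (f'' x) [[a, b]] x)
    (hf'' : ∀ x ∈ [[a, b]], ‖f'' x‖ ≤ M) :
    ‖f b - f a - (b - a) • f' a‖ ≤ M * (b - a) ^ 2 := by
  have ha : a ∈ [[a, b]] := left_mem_uIcc
  have hb : b ∈ [[a, b]] := right_mem_uIcc
  have hM : 0 ≤ M := (norm_nonneg _).trans (hf'' a ha)
  have hlip : ∀ x ∈ [[a, b]], ‖f' x - f' a‖ ≤ M * |b - a| := fun x hx =>
    calc ‖f' x - f' a‖ ≤ M * ‖x - a‖ :=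
          (convex_uIcc a b).norm_image_sub_le_of_norm_hasDerivWithin_le hf' hf'' ha hx
      _ ≤ M * |b - a| := by gcongr; exact abs_sub_left_of_mem_uIcc hx
  -- the mean value theorem applied twice: first to `f'`, then to `t ↦ f t - t • f' a`
  have hrem : ∀ x ∈ [[a, b]],
      HasDerivWithinAt (fun t => f t - t • f' a) (f' x - f' a) [[a, b]] x := fun x hx =>
    ((hf x hx).sub ((hasDerivWithinAt_id x _).smul_const (f' a))).congr_deriv (by rw [one_smul])
  calc ‖f b - f a - (b - a) • f' a‖ = ‖(f b - b • f' a) - (f a - a • f' a)‖ := by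
        rw [sub_smul]; congr 1; abel
    _ ≤ M * |b - a| * ‖b - a‖ :=
        (convex_uIcc a b).norm_image_sub_le_of_norm_hasDerivWithin_le hrem hlip ha hb
    _ = M * (b - a) ^ 2 := by rw [Real.norm_eq_abs, mul_assoc, ← abs_mul, ← sq, abs_sq]

theorem jfun_of_one_div_lt {q γ t : ℝ} (hγ : 0 < γ) (ht : 1 / γ < t) :
    jfun q γ t = q ^ q * γ ^ (1 - q) - q * (t + (q - 1) / γ) ^ (q - 1) := by
  have ht0 : 0 < t := (one_div_pos.2 hγ).trans ht
  rw [jfun, abs_of_pos ht0, if_pos ht, Real.sign_of_pos ht0, mul_one]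

theorem hasDerivAt_rpow_add_const (c p : ℝ) {x : ℝ} (hx : 0 < x + c) :
    HasDerivAt (fun t => (t + c) ^ p) (p * (x + c) ^ (p - 1)) x :=
  (Real.hasDerivAt_rpow_const (Or.inl hx.ne')).comp_add_const x c

theorem abs_rpow_add_sub_sub_deriv_le {a b c p m : ℝ} (hm : 0 < m) (hp : p ≤ 2)
    (ha : m ≤ a + c) (hb : m ≤ b + c) :
    |(b + c) ^ p - (a + c) ^ p - (b - a) * (p * (a + c) ^ (p - 1))| ≤
      |p * (p - 1)| * m ^ (p - 2) * (b - a) ^ 2 := by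
  have hmx : ∀ x ∈ [[a, b]], m ≤ x + c := fun x hx =>
    (le_min ha hb).trans (by rw [min_add_add_right]; exact (add_le_add_iff_right c).2 hx.1)
  have hpos : ∀ x ∈ [[a, b]], 0 < x + c := fun x hx => hm.trans_le (hmx x hx)
  have hd : ∀ x ∈ [[a, b]],
      HasDerivWithinAt (fun t => (t + c) ^ p) (p * (x + c) ^ (p - 1)) [[a, b]] x := fun x hx =>
    (hasDerivAt_rpow_add_const c p (hpos x hx)).hasDerivWithinAt
  have hd' : ∀ x ∈ [[a, b]], HasDerivWithinAt (fun t => p * (t + c) ^ (p - 1))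
      (p * (p - 1) * (x + c) ^ (p - 2)) [[a, b]] x := fun x hx =>
    ((hasDerivAt_rpow_add_const c (p - 1) (hpos x hx)).const_mul p).hasDerivWithinAt.congr_deriv
      (by rw [sub_sub, one_add_one_eq_two, mul_assoc])
  have hd'' : ∀ x ∈ [[a, b]], ‖p * (p - 1) * (x + c) ^ (p - 2)‖ ≤ |p * (p - 1)| * m ^ (p - 2) :=
    fun x hx => by
      rw [Real.norm_eq_abs, abs_mul, abs_of_nonneg (Real.rpow_nonneg (hpos x hx).le _)]
      exact mul_le_mul_of_nonneg_left
        (Real.rpow_le_rpow_of_nonpos hm (hmx x hx) (by linarith)) (abs_nonneg _)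
  simpa using norm_sub_sub_smul_deriv_le hd hd' hd''

/-- Second-order Taylor estimate used in the proof of Theorem 4.3: for all
`a, b > 1/γ`,
`|j(a) − j(b)| ≤ q(1−q)(a + (q−1)/γ)^(q−2) |a − b|
     + q(1−q)(2−q)(q/γ)^(q−3) (a − b)²`. -/
theorem jfun_taylor_estimate (q γ : ℝ) (hq0 : 0 < q) (hq1 : q < 1) (hγ : 0 < γ) :
    ∀ a b : ℝ, 1 / γ < a → 1 / γ < b →
      |jfun q γ a - jfun q γ b| ≤
        q * (1 - q) * (a + (q - 1) / γ) ^ (q - 2) * |a - b| +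
          q * (1 - q) * (2 - q) * (q / γ) ^ (q - 3) * (a - b) ^ 2 := by
  intro a b ha hb
  set c := (q - 1) / γ
  have hshift : ∀ t, 1 / γ < t → q / γ ≤ t + c := fun t ht => by
    have : q / γ = 1 / γ + c := by ring
    linarith
  have htaylor := abs_rpow_add_sub_sub_deriv_le (p := q - 1) (div_pos hq0 hγ) (by linarith)
    (hshift a ha) (hshift b hb)
  rw [show (q - 1) * (q - 1 - 1) = (1 - q) * (2 - q) by ring,
    show q - 1 - 1 = q - 2 by ring, show q - 1 - 2 = q - 3 by ring,
    abs_of_nonneg (a := (1 - q) * (2 - q)) (by nlinarith)] at htaylor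
  have hslope : |(b - a) * (q * (q - 1) * (a + c) ^ (q - 2))| =
      q * (1 - q) * (a + c) ^ (q - 2) * |a - b| := by
    have := sub_pos.2 hq1
    have := Real.rpow_nonneg ((div_pos hq0 hγ).le.trans (hshift a ha)) (q - 2)
    rw [abs_mul, abs_sub_comm b a, show q * (q - 1) = -(q * (1 - q)) by ring, neg_mul,
      abs_neg, abs_of_nonneg (a := q * (1 - q) * _) (by positivity), mul_comm]
  rw [jfun_of_one_div_lt hγ ha, jfun_of_one_div_lt hγ hb]
  calc _ = |q * ((b + c) ^ (q - 1) - (a + c) ^ (q - 1) - (b - a) * ((q - 1) * (a + c) ^ (q - 2)))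
        + (b - a) * (q * (q - 1) * (a + c) ^ (q - 2))| := by congr 1; ring
    _ ≤ q * ((1 - q) * (2 - q) * (q / γ) ^ (q - 3) * (b - a) ^ 2) +
        q * (1 - q) * (a + c) ^ (q - 2) * |a - b| := by
      refine (abs_add_le _ _).trans ?_
      rw [abs_mul, abs_of_pos hq0, hslope]
      gcongr
    _ = _ := by rw [sub_sq_comm]; ring
end
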